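/- arXiv:1005.4581 — 3 statements merged into one kernel-verified Lean document; each statement's English description precedes it below -/
import Mathlib

section
/- Discrete nabla Dubois–Reymond lemma: let T = {t₀ < ... < t_N} ⊂ ℝ with N ≥ 1 and f : T → ℝ. If ∑_{i=1}^{N} ν(t_i) f(t_i) η^∇(t_i) = 0 for every η : T → ℝ with η(t₀) = η(t_N) = 0, then f(t_i) = f(t_1) for all 1 ≤ i ≤ N, i.e., f is constant on {t₁,...,t_N}. -/
/-- Discrete nabla Dubois–Reymond lemma: if ∑_{i=1}^{N} ν(t_i) f(t_i) η^∇(t_i) = 0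
for every η with η(t₀) = η(t_N) = 0, then f is constant on {t₁,...,t_N}. -/
theorem stmt7 (N : ℕ) (hN : 1 ≤ N) (t : ℕ → ℝ) (ht : ∀ i < N, t i < t (i + 1))
    (f : ℕ → ℝ)
    (h : ∀ η : ℕ → ℝ, η 0 = 0 → η N = 0 →
      ∑ i ∈ Finset.Icc 1 N,
        (t i - t (i - 1)) * f i * ((η i - η (i - 1)) / (t i - t (i - 1))) = 0) :
    ∀ i, 1 ≤ i → i ≤ N → f i = f 1 := by
  intro k hk1 hkN
  rcases eq_or_lt_of_le hk1 with h1 | hk2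
  · rw [← h1]
  have hν : ∀ i, 1 ≤ i → i ≤ N → t (i - 1) < t i := by
    intro i hi1 hi2
    have := ht (i - 1) (by omega)
    rwa [Nat.sub_add_cancel hi1] at this
  set η : ℕ → ℝ := fun j => if 1 ≤ j ∧ j ≤ k - 1 then 1 else 0 with hη
  have hη0 : η 0 = 0 := by simp [hη]
  have hηN : η N = 0 := by
    have : ¬ (N ≤ k - 1) := by omega
    simp [hη, this]
  have hs := h η hη0 hηN
  have hcongr : ∀ i ∈ Finset.Icc 1 N,
      (t i - t (i - 1)) * f i * ((η i - η (i - 1)) / (t i - t (i - 1)))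
        = f i * (η i - η (i - 1)) := by
    intro i hi
    simp only [Finset.mem_Icc] at hi
    have hlt := hν i hi.1 hi.2
    have hne : t i - t (i - 1) ≠ 0 := by linarith
    field_simp
  rw [Finset.sum_congr rfl hcongr] at hs
  have hsub : ({1, k} : Finset ℕ) ⊆ Finset.Icc 1 N := by
    intro x hx
    simp only [Finset.mem_insert, Finset.mem_singleton] at hx
    simp only [Finset.mem_Icc]
    omega
  have hzero : ∀ x ∈ Finset.Icc 1 N, x ∉ ({1, k} : Finset ℕ) →
      f x * (η x - η (x - 1)) = 0 := by
    intro x hx hx2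
    simp only [Finset.mem_Icc] at hx
    simp only [Finset.mem_insert, Finset.mem_singleton, not_or] at hx2
    have heq : η x = η (x - 1) := by
      show (if 1 ≤ x ∧ x ≤ k - 1 then (1:ℝ) else 0)
          = (if 1 ≤ x - 1 ∧ x - 1 ≤ k - 1 then (1:ℝ) else 0)
      by_cases hc : 1 ≤ x ∧ x ≤ k - 1
      · rw [if_pos hc, if_pos (show 1 ≤ x - 1 ∧ x - 1 ≤ k - 1 by omega)]
      · rw [if_neg hc, if_neg (show ¬ (1 ≤ x - 1 ∧ x - 1 ≤ k - 1) by omega)]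
    rw [heq]
    ring
  rw [← Finset.sum_subset hsub hzero] at hs
  have h1k : (1 : ℕ) ≠ k := by omega
  rw [Finset.sum_pair h1k] at hs
  have e1 : η 1 = 1 := by
    have : 1 ≤ k - 1 := by omega
    simp [hη, this]
  have e2 : η k = 0 := by
    have : ¬ (k ≤ k - 1) := by omega
    simp [hη, this]
  have e3 : η (k - 1) = 1 := by
    have : 1 ≤ k - 1 ∧ k - 1 ≤ k - 1 := by omega
    simp [hη, this]
  simp only [e1, e2, e3, hη0, Nat.sub_self] at hs
  -- hs : f 1 * (1 - 0) + f k * (0 - 1) = 0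
  have : η (1 - 1) = 0 := by simpa using hη0
  linarith [hs]
end

section
/- Discrete delta Dubois–Reymond lemma: let T = {t₀ < ... < t_N} ⊂ ℝ with N ≥ 1 and g : T → ℝ. If ∑_{i=0}^{N−1} μ(t_i) g(t_i) η^Δ(t_i) = 0 for every η : T → ℝ with η(t₀) = η(t_N) = 0, then g(t_i) = g(t₀) for all 0 ≤ i ≤ N−1. -/
/-- Discrete delta Dubois–Reymond lemma: if ∑_{i=0}^{N-1} μ(t_i) g(t_i) η^Δ(t_i) = 0
for every η with η(t₀) = η(t_N) = 0, then g is constant on {t₀,...,t_{N-1}}. -/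
theorem stmt8 (N : ℕ) (hN : 1 ≤ N) (t : ℕ → ℝ) (ht : ∀ i < N, t i < t (i + 1))
    (g : ℕ → ℝ)
    (h : ∀ η : ℕ → ℝ, η 0 = 0 → η N = 0 →
      ∑ i ∈ Finset.range N,
        (t (i + 1) - t i) * g i * ((η (i + 1) - η i) / (t (i + 1) - t i)) = 0) :
    ∀ i, i ≤ N - 1 → g i = g 0 := by
  intro i hi
  rcases Nat.eq_zero_or_pos i with rfl | hipos
  · rfl
  have hiN : i < N := by omega
  set η : ℕ → ℝ := fun j => if 1 ≤ j ∧ j ≤ i then (1:ℝ) else 0 with hη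
  have h0 : η 0 = 0 := by simp [hη]
  have hNN : η N = 0 := by simp [hη]; omega
  have hsum := h η h0 hNN
  have hstep : ∀ j, η (j + 1) - η j
      = (if j = 0 then (1:ℝ) else 0) - (if j = i then 1 else 0) := by
    intro j
    simp only [hη]
    split_ifs <;> norm_num <;> omega
  have hne : ∀ j < N, t (j + 1) - t j ≠ 0 := fun j hj =>
    sub_ne_zero.mpr (ne_of_gt (ht j hj))
  have key : ∑ j ∈ Finset.range N, g j *
      ((if j = 0 then (1:ℝ) else 0) - (if j = i then 1 else 0)) = 0 := by
    refine Eq.trans ?_ hsum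
    exact Finset.sum_congr rfl fun j hj => by
      rw [← hstep j]
      have := hne j (Finset.mem_range.mp hj)
      field_simp
  rw [Finset.sum_congr rfl (fun j _ => by rw [mul_sub])] at key
  rw [Finset.sum_sub_distrib] at key
  simp only [mul_ite, mul_one, mul_zero] at key
  rw [Finset.sum_ite_eq' (Finset.range N) 0 g,
      Finset.sum_ite_eq' (Finset.range N) i g] at key
  simp only [Finset.mem_range, hiN, hN, if_true] at key
  have : (0:ℕ) < N := hN
  simp only [this, if_true] at key
  linarith
end

section
/- Piecewise linear extension preserves convexity: let T ⊂ ℝ be a closed set containing its infimum a and supremum b, and f : T → ℝ. Define f̄ : [a,b] → ℝ by f̄(t) = f(t) for t ∈ T, and f̄(t) = f(s) + ((f(σ(s)) − f(s))/(σ(s) − s))·(t − s) for t in a gap (s, σ(s)), where σ(s) = inf{τ ∈ T : τ > s}. Then f̄ is convex on [a,b] if and only if f is convex on T (i.e., f(λx + (1−λ)y) ≤ λf(x) + (1−λ)f(y) whenever x, y ∈ T, λ ∈ [0,1], and λx+(1−λ)y ∈ T). -/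
open Classical

/-- Forward jump operator of a set T ⊆ ℝ. -/
noncomputable def tsSigma (T : Set ℝ) (s : ℝ) : ℝ := sInf {τ ∈ T | s < τ}

/-- Piecewise linear extension of f : ℝ → ℝ (viewed on T) to the real line:
it agrees with f on T and interpolates linearly across each gap (s, σ(s)). -/

noncomputable def pwExt (T : Set ℝ) (f : ℝ → ℝ) (x : ℝ) : ℝ :=
  if x ∈ T then f x
  else
    let s := sSup (T ∩ Set.Iic x)
    f s + ((f (tsSigma T s) - f s) / (tsSigma T s - s)) * (x - s)

/-!
Write `D(x, z, y) = (y - z) g x + (z - x) g y - (y - x) g z`, so that `g` is convex on an interval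
iff `D ≥ 0` whenever `x < z < y`. As the determinant of the rows `(1, x, g x)`, `(1, z, g z)`,
`(1, y, g y)`, `D` is affine in each row; hence, when `g` is affine on a gap of `T`, the value of `D`
with one point inside the gap is a convex combination of its values with that point moved to either
end of the gap. Moving the three points to `T` one after the other reduces the convexity of the
extension to the three-point inequality on `T`.
-/

open Set

noncomputable def chordDefect (g : ℝ → ℝ) (x z y : ℝ) : ℝ :=
  (y - z) * g x + (z - x) * g y - (y - x) * g z

section ChordDefect

variable {g : ℝ → ℝ}

lemma chordDefect_self_left (x y : ℝ) : chordDefect g x x y = 0 := by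
  unfold chordDefect; ring

lemma chordDefect_self_right (x y : ℝ) : chordDefect g x y y = 0 := by
  unfold chordDefect; ring

lemma chordDefect_eq_zero_of_affineOn {s t c k : ℝ} (hg : ∀ w ∈ Icc s t, g w = c + k * w)
    {p z q : ℝ} (hp : p ∈ Icc s t) (hz : z ∈ Icc s t) (hq : q ∈ Icc s t) :
    chordDefect g p z q = 0 := by
  rw [chordDefect, hg p hp, hg z hz, hg q hq]; ring

lemma nonneg_of_interpolates {s w t A B D : ℝ} (hst : s < t) (hw : w ∈ Icc s t)
    (hA : 0 ≤ A) (hB : 0 ≤ B) (h : (t - s) * D = (t - w) * A + (w - s) * B) : 0 ≤ D := by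
  have : 0 ≤ (t - s) * D := h ▸ add_nonneg (mul_nonneg (by linarith [hw.2]) hA)
    (mul_nonneg (by linarith [hw.1]) hB)
  exact nonneg_of_mul_nonneg_right this (by linarith)

variable {s w t : ℝ} (hst : s < t) (hw : w ∈ Icc s t) (hlin : chordDefect g s w t = 0)
include hst hw hlin

lemma chordDefect_nonneg_of_interp_left {z y : ℝ}
    (hs : 0 ≤ chordDefect g s z y) (ht : 0 ≤ chordDefect g t z y) :
    0 ≤ chordDefect g w z y :=
  nonneg_of_interpolates hst hw hs ht <| by
    unfold chordDefect at *; linear_combination (z - y) * hlin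

lemma chordDefect_nonneg_of_interp_mid {x y : ℝ}
    (hs : 0 ≤ chordDefect g x s y) (ht : 0 ≤ chordDefect g x t y) :
    0 ≤ chordDefect g x w y :=
  nonneg_of_interpolates hst hw hs ht <| by
    unfold chordDefect at *; linear_combination (y - x) * hlin

lemma chordDefect_nonneg_of_interp_right {x z : ℝ}
    (hs : 0 ≤ chordDefect g x z s) (ht : 0 ≤ chordDefect g x z t) :
    0 ≤ chordDefect g x z w :=
  nonneg_of_interpolates hst hw hs ht <| by
    unfold chordDefect at *; linear_combination (x - z) * hlin

end ChordDefect

lemma convexOn_of_chordDefect_nonneg {S : Set ℝ} {g : ℝ → ℝ} (hS : Convex ℝ S)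
    (h : ∀ x ∈ S, ∀ z ∈ S, ∀ y ∈ S, x < z → z < y → 0 ≤ chordDefect g x z y) :
    ConvexOn ℝ S g := by
  refine convexOn_of_slope_mono_adjacent hS fun {x z y} hx hy hxz hzy => ?_
  have hD := h x hx z (hS.ordConnected.out hx hy ⟨hxz.le, hzy.le⟩) y hy hxz hzy
  rw [div_le_div_iff₀ (sub_pos.2 hxz) (sub_pos.2 hzy)]
  unfold chordDefect at hD
  linarith

lemma chordDefect_nonneg_of_le_combination {S : Set ℝ} {f : ℝ → ℝ}
    (hf : ∀ x ∈ S, ∀ y ∈ S, ∀ l ∈ Icc (0 : ℝ) 1,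
      l * x + (1 - l) * y ∈ S → f (l * x + (1 - l) * y) ≤ l * f x + (1 - l) * f y)
    {x z y : ℝ} (hx : x ∈ S) (hz : z ∈ S) (hy : y ∈ S) (hxz : x ≤ z) (hzy : z ≤ y) :
    0 ≤ chordDefect f x z y := by
  rcases hzy.eq_or_lt with rfl | hzy
  · exact (chordDefect_self_right x z).ge
  have hyx : 0 < y - x := by linarith
  set l := (y - z) / (y - x)
  have hl : l ∈ Icc (0 : ℝ) 1 :=
    ⟨div_nonneg (by linarith) hyx.le, (div_le_one hyx).2 (by linarith)⟩
  have hcomb : l * x + (1 - l) * y = z := by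
    simp only [l]; field_simp; ring
  have hle := hf x hx y hy l hl (hcomb ▸ hz)
  rw [hcomb] at hle
  have key : chordDefect f x z y = (y - x) * (l * f x + (1 - l) * f y - f z) := by
    simp only [chordDefect, l]; field_simp; ring
  rw [key]
  exact mul_nonneg hyx.le (by linarith)

structure IsGap (T : Set ℝ) (s t : ℝ) : Prop where
  left_mem : s ∈ T
  right_mem : t ∈ T
  lt : s < t
  le_or_le : ∀ w ∈ T, w ≤ s ∨ t ≤ w

lemma exists_isGap_of_notMem {T : Set ℝ} (hT : IsClosed T) {a b : ℝ} (ha : IsLeast T a)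
    (hb : IsGreatest T b) {x : ℝ} (hx : x ∈ Icc a b) (hxT : x ∉ T) :
    ∃ s t, IsGap T s t ∧ x ∈ Ioo s t := by
  have hs := (hT.inter isClosed_Iic).csSup_mem ⟨a, ha.1, hx.1⟩ ⟨x, fun τ hτ => hτ.2⟩
  have ht := (hT.inter isClosed_Ici).csInf_mem ⟨b, hb.1, hx.2⟩ ⟨x, fun τ hτ => hτ.2⟩
  have hsx : sSup (T ∩ Iic x) < x := hs.2.lt_of_ne fun h => hxT (h ▸ hs.1)
  have hxt : x < sInf (T ∩ Ici x) := ht.2.lt_of_ne' fun h => hxT (h ▸ ht.1)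
  refine ⟨_, _, ⟨hs.1, ht.1, hsx.trans hxt, fun w hw => ?_⟩, hsx, hxt⟩
  rcases le_total w x with hwx | hxw
  · exact .inl (le_csSup ⟨x, fun τ hτ => hτ.2⟩ ⟨hw, hwx⟩)
  · exact .inr (csInf_le ⟨x, fun τ hτ => hτ.2⟩ ⟨hw, hxw⟩)

section AffineOnGaps

variable {T : Set ℝ} {a b : ℝ} {g : ℝ → ℝ}
  (haff : ∀ s t, IsGap T s t → ∃ c k : ℝ, ∀ w ∈ Icc s t, g w = c + k * w)
include haff

lemma IsGap.chordDefect_eq_zero {s t : ℝ} (h : IsGap T s t) {w : ℝ} (hw : w ∈ Icc s t) :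
    chordDefect g s w t = 0 := by
  obtain ⟨c, k, hck⟩ := haff s t h
  exact chordDefect_eq_zero_of_affineOn hck ⟨le_rfl, h.lt.le⟩ hw ⟨h.lt.le, le_rfl⟩

variable (hgap : ∀ x ∈ Icc a b, x ∉ T → ∃ s t, IsGap T s t ∧ x ∈ Ioo s t)
  (hT : ∀ x ∈ T, ∀ z ∈ T, ∀ y ∈ T, x ≤ z → z ≤ y → 0 ≤ chordDefect g x z y)
include hgap hT

lemma chordDefect_nonneg_of_mem_of_mem {x z y : ℝ} (hx : x ∈ T) (hz : z ∈ T) (hy : y ∈ Icc a b)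
    (hxz : x ≤ z) (hzy : z ≤ y) : 0 ≤ chordDefect g x z y := by
  by_cases hyT : y ∈ T
  · exact hT x hx z hz y hyT hxz hzy
  obtain ⟨d, e, hde, hdy, hye⟩ := hgap y hy hyT
  have hzd : z ≤ d := (hde.le_or_le z hz).resolve_right fun hez => by linarith
  exact chordDefect_nonneg_of_interp_right hde.lt ⟨hdy.le, hye.le⟩
    (hde.chordDefect_eq_zero haff ⟨hdy.le, hye.le⟩)
    (hT x hx z hz d hde.left_mem hxz hzd)
    (hT x hx z hz e hde.right_mem hxz (by linarith))

lemma chordDefect_nonneg_of_mem {x z y : ℝ} (hx : x ∈ Icc a b) (hz : z ∈ T) (hy : y ∈ Icc a b)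
    (hxz : x ≤ z) (hzy : z ≤ y) : 0 ≤ chordDefect g x z y := by
  by_cases hxT : x ∈ T
  · exact chordDefect_nonneg_of_mem_of_mem haff hgap hT hxT hz hy hxz hzy
  obtain ⟨s, c, hsc, hsx, hxc⟩ := hgap x hx hxT
  have hcz : c ≤ z := (hsc.le_or_le z hz).resolve_left fun hzs => by linarith
  exact chordDefect_nonneg_of_interp_left hsc.lt ⟨hsx.le, hxc.le⟩
    (hsc.chordDefect_eq_zero haff ⟨hsx.le, hxc.le⟩)
    (chordDefect_nonneg_of_mem_of_mem haff hgap hT hsc.left_mem hz hy (by linarith) hzy)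
    (chordDefect_nonneg_of_mem_of_mem haff hgap hT hsc.right_mem hz hy hcz hzy)

theorem convexOn_Icc_of_affineOn_gaps : ConvexOn ℝ (Icc a b) g := by
  refine convexOn_of_chordDefect_nonneg (convex_Icc a b) fun x hx z hz y hy hxz hzy => ?_
  by_cases hzT : z ∈ T
  · exact chordDefect_nonneg_of_mem haff hgap hT hx hzT hy hxz.le hzy.le
  obtain ⟨u, v, huv, huz, hzv⟩ := hgap z hz hzT
  -- `z` moves within the part `[max u x, min v y]` of the gap lying between `x` and `y`
  have hp : max u x ∈ Ico u z := ⟨le_max_left _ _, max_lt huz hxz⟩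
  have hq : min v y ∈ Ioc z v := ⟨lt_min hzv hzy, min_le_left _ _⟩
  have hleft : 0 ≤ chordDefect g x (max u x) y := by
    rcases le_total u x with hux | hxu
    · rw [max_eq_right hux, chordDefect_self_left]
    · rw [max_eq_left hxu]
      exact chordDefect_nonneg_of_mem haff hgap hT hx huv.left_mem hy hxu (by linarith)
  have hright : 0 ≤ chordDefect g x (min v y) y := by
    rcases le_total v y with hvy | hyv
    · rw [min_eq_left hvy]
      exact chordDefect_nonneg_of_mem haff hgap hT hx huv.right_mem hy (by linarith) hvy
    · rw [min_eq_right hyv, chordDefect_self_right]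
  obtain ⟨c, k, hck⟩ := haff u v huv
  have hlin : chordDefect g (max u x) z (min v y) = 0 :=
    chordDefect_eq_zero_of_affineOn hck ⟨hp.1, by linarith [hp.2]⟩ ⟨huz.le, hzv.le⟩
      ⟨by linarith [hq.1], hq.2⟩
  exact chordDefect_nonneg_of_interp_mid (hp.2.trans hq.1) ⟨hp.2.le, hq.1.le⟩ hlin hleft hright

end AffineOnGaps

section PwExt

variable {T : Set ℝ} {f : ℝ → ℝ}

lemma pwExt_of_mem {x : ℝ} (hx : x ∈ T) : pwExt T f x = f x := if_pos hx

lemma IsGap.pwExt_eq {s t : ℝ} (h : IsGap T s t) {w : ℝ} (hw : w ∈ Icc s t) :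
    pwExt T f w = f s + (f t - f s) / (t - s) * (w - s) := by
  rcases hw.1.eq_or_lt with rfl | hsw
  · rw [pwExt_of_mem h.left_mem]; ring
  rcases hw.2.eq_or_lt with rfl | hwt
  · rw [pwExt_of_mem h.right_mem, div_mul_cancel₀ _ (sub_ne_zero.2 h.lt.ne')]; ring
  have hwT : w ∉ T := fun hw => (h.le_or_le w hw).elim (fun h => by linarith) fun h => by linarith
  have hs : sSup (T ∩ Iic w) = s := IsGreatest.csSup_eq ⟨⟨h.left_mem, hsw.le⟩,
    fun τ ⟨hτ, hτw⟩ => (h.le_or_le τ hτ).resolve_right fun h => by linarith [mem_Iic.1 hτw]⟩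
  have ht : tsSigma T s = t := IsLeast.csInf_eq
    ⟨⟨h.right_mem, h.lt⟩, fun τ ⟨hτ, hsτ⟩ => (h.le_or_le τ hτ).resolve_left fun h => by linarith [hsτ]⟩
  simp only [pwExt, if_neg hwT, hs, ht]

lemma IsGap.pwExt_affineOn {s t : ℝ} (h : IsGap T s t) :
    ∃ c k : ℝ, ∀ w ∈ Icc s t, pwExt T f w = c + k * w :=
  ⟨f s - (f t - f s) / (t - s) * s, (f t - f s) / (t - s), fun w hw => by
    rw [h.pwExt_eq hw]; ring⟩

end PwExt

/-- The piecewise linear extension f̄ is convex on [a,b] iff f is convex on T. -/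
theorem stmt11 (T : Set ℝ) (hT : IsClosed T) (a b : ℝ)
    (ha : IsLeast T a) (hb : IsGreatest T b) (f : ℝ → ℝ) :
    ConvexOn ℝ (Set.Icc a b) (pwExt T f) ↔
      (∀ x ∈ T, ∀ y ∈ T, ∀ l ∈ Set.Icc (0 : ℝ) 1,
        l * x + (1 - l) * y ∈ T →
          f (l * x + (1 - l) * y) ≤ l * f x + (1 - l) * f y) := by
  have hsub : T ⊆ Icc a b := fun w hw => ⟨ha.2 hw, hb.2 hw⟩
  constructor
  · intro hcv x hx y hy l hl hmem
    have := hcv.2 (hsub hx) (hsub hy) hl.1 (sub_nonneg.2 hl.2) (add_sub_cancel l 1)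
    simpa only [smul_eq_mul, pwExt_of_mem hx, pwExt_of_mem hy, pwExt_of_mem hmem] using this
  · intro hconv
    refine convexOn_Icc_of_affineOn_gaps (fun s t h => h.pwExt_affineOn)
      (fun x hx hxT => exists_isGap_of_notMem hT ha hb hx hxT) fun x hx z hz y hy hxz hzy => ?_
    simpa only [chordDefect, pwExt_of_mem hx, pwExt_of_mem hz, pwExt_of_mem hy] using
      chordDefect_nonneg_of_le_combination hconv hx hz hy hxz hzy
end
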